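/- Consider ℤ × ℤ with operations (y,k) + (y',k') = (y + y', (-1)^{y'} k + (-1)^y k') and (y,k) ∘ (y',k') = (y + y', k + k'). Then (ℤ × ℤ, +, ∘) is a digroup but NOT a left skew brace: there exist a, b, c with a ∘ (b + c) ≠ (a ∘ b) + (-(a)) + (a ∘ c) (inverse taken with respect to +). -/

import Mathlib

/-!
The map `(y, k) ↦ (y, (-1)^y k)` is an involution of `ℤ × ℤ` that carries `+` to coordinatewise
addition, so `+` is (isomorphic to) the group `ℤ × ℤ`, with inverse `neg15`; and `∘` is literally
coordinatewise addition. The brace identity already fails at `a = (0, 1)`, `b = c = (1, 0)`.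
-/

/-- (-1)^y for y : ℤ. -/
def msign (y : ℤ) : ℤ := (((-1 : ℤˣ) ^ y : ℤˣ) : ℤ)

/-- (y,k) + (y',k') = (y + y', (-1)^{y'} k + (-1)^y k') -/
def add15 (p q : ℤ × ℤ) : ℤ × ℤ := (p.1 + q.1, msign q.1 * p.2 + msign p.1 * q.2)

/-- (y,k) ∘ (y',k') = (y + y', k + k') -/
def cmul15 (p q : ℤ × ℤ) : ℤ × ℤ := (p.1 + q.1, p.2 + q.2)

/-- The inverse of (y,k) with respect to +. -/
def neg15 (p : ℤ × ℤ) : ℤ × ℤ := (-p.1, -p.2)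

lemma msign_zero : msign 0 = 1 := by simp [msign]

lemma msign_one : msign 1 = -1 := by simp [msign]

lemma msign_add (a b : ℤ) : msign (a + b) = msign a * msign b := by
  simp [msign, zpow_add]

lemma msign_neg (a : ℤ) : msign (-a) = msign a := by
  simp [msign, zpow_neg]

lemma msign_mul_self (a : ℤ) : msign a * msign a = 1 := by
  simp [msign, ← Units.val_mul]

def untwist (p : ℤ × ℤ) : ℤ × ℤ := (p.1, msign p.1 * p.2)

lemma untwist_untwist (p : ℤ × ℤ) : untwist (untwist p) = p := by
  simp [untwist, ← mul_assoc, msign_mul_self]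

lemma untwist_zero : untwist 0 = 0 := by
  simp [untwist]

lemma add15_eq_untwist (p q : ℤ × ℤ) : add15 p q = untwist (untwist p + untwist q) := by
  ext
  · rfl
  · simp only [add15, untwist, Prod.fst_add, Prod.snd_add, msign_add]
    linear_combination -(msign q.1 * p.2) * msign_mul_self p.1 - (msign p.1 * q.2) * msign_mul_self q.1

lemma neg15_eq_untwist (p : ℤ × ℤ) : neg15 p = untwist (-untwist p) := by
  ext
  · rfl
  · simp only [neg15, untwist, Prod.fst_neg, Prod.snd_neg, msign_neg]
    linear_combination p.2 * msign_mul_self p.1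

lemma cmul15_eq_add (p q : ℤ × ℤ) : cmul15 p q = p + q := rfl

lemma add15_assoc (p q r : ℤ × ℤ) : add15 (add15 p q) r = add15 p (add15 q r) := by
  simp only [add15_eq_untwist, untwist_untwist, add_assoc]

lemma zero_add15 (p : ℤ × ℤ) : add15 0 p = p := by
  rw [add15_eq_untwist, untwist_zero, zero_add, untwist_untwist]

lemma add15_zero (p : ℤ × ℤ) : add15 p 0 = p := by
  rw [add15_eq_untwist, untwist_zero, add_zero, untwist_untwist]

lemma neg15_add15 (p : ℤ × ℤ) : add15 (neg15 p) p = 0 := by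
  rw [add15_eq_untwist, neg15_eq_untwist, untwist_untwist, neg_add_cancel, untwist_zero]

lemma add15_neg15 (p : ℤ × ℤ) : add15 p (neg15 p) = 0 := by
  rw [add15_eq_untwist, neg15_eq_untwist, untwist_untwist, add_neg_cancel, untwist_zero]

lemma cmul15_add15_ne :
    cmul15 (0, 1) (add15 (1, 0) (1, 0)) ≠
      add15 (add15 (cmul15 (0, 1) (1, 0)) (neg15 (0, 1))) (cmul15 (0, 1) (1, 0)) := by
  norm_num [add15, cmul15, neg15, msign_zero, msign_one]

/-- (ℤ × ℤ, +, ∘) with these operations is a digroup but not a left skew brace. -/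
theorem zxz_digroup_not_skew_brace :
    (∀ p q r, add15 (add15 p q) r = add15 p (add15 q r)) ∧
    (∀ p, add15 (0, 0) p = p) ∧ (∀ p, add15 p (0, 0) = p) ∧
    (∀ p, add15 (neg15 p) p = (0, 0) ∧ add15 p (neg15 p) = (0, 0)) ∧
    (∀ p q r, cmul15 (cmul15 p q) r = cmul15 p (cmul15 q r)) ∧
    (∀ p, cmul15 (0, 0) p = p) ∧ (∀ p, cmul15 p (0, 0) = p) ∧
    (∀ p, ∃ q, cmul15 q p = (0, 0) ∧ cmul15 p q = (0, 0)) ∧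
    (∃ a b c, cmul15 a (add15 b c) ≠
      add15 (add15 (cmul15 a b) (neg15 a)) (cmul15 a c)) :=
  ⟨add15_assoc, zero_add15, add15_zero, fun p => ⟨neg15_add15 p, add15_neg15 p⟩,
    fun p q r => add_assoc p q r, zero_add, add_zero,
    fun p => ⟨-p, neg_add_cancel p, add_neg_cancel p⟩, _, _, _, cmul15_add15_ne⟩
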